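/- arXiv:2010.13299 — 5 statements merged into one kernel-verified Lean document; each statement's English description precedes it below -/
import Mathlib

section
/- Let H ∈ ℝ^{d×d} be invertible, R, P ∈ ℝ^{d×d} symmetric positive definite, and K = P H^T (H P H^T + R)^{-1}. Then the spectral radius of I - K H is strictly less than 1, and consequently the iteration u_{i+1} = (I - KH) u_i + K y converges to the unique solution u* of y = Hu as i → ∞. -/
/-!
Write `P = T Tᴴ` with `T = √P` and put `N = H T`. Then `I - K H = T C T⁻¹` with
`C = I - Nᴴ (N Nᴴ + R)⁻¹ N`. By the Woodbury identity `C = (I + Nᴴ R⁻¹ N)⁻¹` is positive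
definite, and `I - C = Nᴴ (N Nᴴ + R)⁻¹ N` is positive definite because `N` is invertible,
so the Hermitian matrix `C` has all its eigenvalues in `(0, 1)`. Hence `I - K H` is
diagonalizable with eigenvalues in `(0, 1)`: its spectrum lies in the open unit disc and its
powers tend to `0`, which drives the error `u i - u* = (I - K H) ^ i (u 0 - u*)` to `0`.
-/

open Matrix Filter Topology
open scoped ComplexOrder MatrixOrder

namespace Matrix

variable {n : Type*} [Fintype n] [DecidableEq n]

theorem spectrum_map_conj_diagonal {K L : Type*} [Field K] [Field L] [Algebra K L]
    {W : Matrix n n K} (hW : IsUnit W) (μ : n → K) :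
    spectrum L ((W * diagonal μ * W⁻¹).map (algebraMap K L)) =
      Set.range fun i => algebraMap K L (μ i) := by
  lift W to (Matrix n n K)ˣ using hW
  let f := (algebraMap K L).mapMatrix (m := n)
  change spectrum L (f ((W : Matrix n n K) * diagonal μ * (W : Matrix n n K)⁻¹)) = _
  rw [← coe_units_inv, map_mul, map_mul]
  let V : (Matrix n n L)ˣ := Units.map f.toMonoidHom W
  change spectrum L ((V : Matrix n n L) * _ * ((V⁻¹ : (Matrix n n L)ˣ) : Matrix n n L)) = _
  rw [spectrum.units_conjugate, RingHom.mapMatrix_apply, diagonal_map (map_zero _),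
    spectrum_diagonal]

theorem tendsto_pow_conj_diagonal {𝕜 : Type*} [NormedField 𝕜]
    {W : Matrix n n 𝕜} (hW : IsUnit W) {μ : n → 𝕜} (hμ : ∀ i, ‖μ i‖ < 1) :
    Tendsto (fun k : ℕ => (W * diagonal μ * W⁻¹) ^ k) atTop (𝓝 0) := by
  lift W to (Matrix n n 𝕜)ˣ using hW
  have hdiag : Tendsto (fun k : ℕ => diagonal (μ ^ k)) atTop (𝓝 (diagonal 0)) :=
    (continuous_id.matrix_diagonal.tendsto _).comp <|
      tendsto_pi_nhds.mpr fun i => tendsto_pow_atTop_nhds_zero_of_norm_lt_one (hμ i)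
  simp_rw [← coe_units_inv, Units.conj_pow, diagonal_pow]
  simpa using ((tendsto_const_nhds (x := (W : Matrix n n 𝕜))).mul hdiag).mul
    (tendsto_const_nhds (x := ((W⁻¹ : (Matrix n n 𝕜)ˣ) : Matrix n n 𝕜)))

theorem tendsto_of_affine_recurrence {R : Type*} [CommRing R] [TopologicalSpace R]
    [IsTopologicalRing R] {M : Matrix n n R} {b x : n → R} {u : ℕ → n → R}
    (hrec : ∀ i, u (i + 1) = M *ᵥ u i + b) (hfix : M *ᵥ x + b = x)
    (hM : Tendsto (fun k : ℕ => M ^ k) atTop (𝓝 0)) :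
    Tendsto u atTop (𝓝 x) := by
  have herr : ∀ k, u k = M ^ k *ᵥ (u 0 - x) + x := by
    intro k
    induction k with
    | zero => simp
    | succ k ih => rw [hrec, ih, mulVec_add, mulVec_mulVec, ← pow_succ', add_assoc, hfix]
  have hcont : Continuous fun A : Matrix n n R => A *ᵥ (u 0 - x) + x :=
    (continuous_id.matrix_mulVec continuous_const).add continuous_const
  have hlim := (hcont.tendsto 0).comp hM
  rw [zero_mulVec, zero_add] at hlim
  exact hlim.congr fun k => (herr k).symm

theorem one_sub_mul_conjTranspose_mul_inv_mul_eq_conj {K : Type*} [Field K] [StarRing K]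
    {P H R T : Matrix n n K} (hP : P = T * Tᴴ) (hT : IsUnit T) :
    1 - P * Hᴴ * (H * P * Hᴴ + R)⁻¹ * H =
      T * (1 - (H * T)ᴴ * (H * T * (H * T)ᴴ + R)⁻¹ * (H * T)) * T⁻¹ := by
  have hTinv : T * T⁻¹ = 1 := mul_nonsing_inv T ((isUnit_iff_isUnit_det T).mp hT)
  simp only [hP, conjTranspose_mul, Matrix.mul_sub, Matrix.sub_mul, Matrix.mul_one, hTinv,
    Matrix.mul_assoc]

section RCLike

variable {𝕜 : Type*} [RCLike 𝕜]

theorem PosDef.one_sub_conjTranspose_mul_inv_mul {R : Matrix n n 𝕜} (hR : R.PosDef)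
    (N : Matrix n n 𝕜) : (1 - Nᴴ * (N * Nᴴ + R)⁻¹ * N).PosDef := by
  have hS : (N * Nᴴ + R).PosDef := hR.posSemidef_add (posSemidef_self_mul_conjTranspose N)
  have hwoodbury := add_mul_mul_inv_eq_sub 1 Nᴴ R⁻¹ N isUnit_one hR.inv.isUnit
  rw [nonsing_inv_nonsing_inv R ((isUnit_iff_isUnit_det R).mp hR.isUnit), inv_one, mul_one,
    one_mul, mul_one, add_comm R] at hwoodbury
  rw [← hwoodbury hS.isUnit]
  exact (PosDef.one.add_posSemidef (hR.inv.posSemidef.conjTranspose_mul_mul_same N)).inv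

theorem PosDef.conjTranspose_mul_inv_mul {R N : Matrix n n 𝕜} (hR : R.PosDef) (hN : IsUnit N) :
    (Nᴴ * (N * Nᴴ + R)⁻¹ * N).PosDef :=
  (hR.posSemidef_add (posSemidef_self_mul_conjTranspose N)).inv.conjTranspose_mul_mul_same
    (mulVec_injective_of_isUnit hN)

theorem IsHermitian.eigenvalues_lt_one {A : Matrix n n 𝕜} (hA : A.IsHermitian)
    (h : (1 - A).PosDef) (i : n) : hA.eigenvalues i < 1 := by
  set v := ⇑(hA.eigenvectorBasis i)
  have hv : v ≠ 0 := (WithLp.ofLp_eq_zero 2).ne.mpr (hA.eigenvectorBasis.orthonormal.ne_zero i)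
  have hvv : 0 < RCLike.re (star v ⬝ᵥ v) :=
    (RCLike.pos_iff.mp (dotProduct_star_self_pos_iff.mpr hv)).1
  have hpos := h.dotProduct_mulVec_pos hv
  rw [sub_mulVec, one_mulVec, hA.mulVec_eigenvectorBasis, dotProduct_sub, dotProduct_smul] at hpos
  have hre := (RCLike.pos_iff.mp hpos).1
  rw [map_sub, RCLike.smul_re] at hre
  nlinarith

theorem IsHermitian.eq_conj_diagonal_eigenvalues {A : Matrix n n 𝕜} (hA : A.IsHermitian) :
    A = (hA.eigenvectorUnitary : Matrix n n 𝕜) * diagonal (RCLike.ofReal ∘ hA.eigenvalues) *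
      (hA.eigenvectorUnitary : Matrix n n 𝕜)⁻¹ := by
  rw [inv_eq_left_inv (Unitary.coe_star_mul_self hA.eigenvectorUnitary)]
  exact hA.spectral_theorem

end RCLike

end Matrix

theorem exists_conj_diagonal_one_sub_kalmanGain_mul {𝕜 n : Type*} [RCLike 𝕜] [Fintype n]
    [DecidableEq n] {R P H : Matrix n n 𝕜} (hR : R.PosDef) (hP : P.PosDef) (hH : IsUnit H) :
    ∃ (W : Matrix n n 𝕜) (μ : n → ℝ), IsUnit W ∧
      1 - P * Hᴴ * (H * P * Hᴴ + R)⁻¹ * H = W * diagonal (RCLike.ofReal ∘ μ) * W⁻¹ ∧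
      ∀ i, μ i ∈ Set.Ioo 0 1 := by
  obtain ⟨T, hPT, hT⟩ : ∃ T, P = T * Tᴴ ∧ IsUnit T :=
    ⟨CFC.sqrt P, by rw [(CFC.sqrt_nonneg P).posSemidef.isHermitian.eq,
      CFC.sqrt_mul_sqrt_self P hP.posSemidef.nonneg],
      CFC.isUnit_sqrt_iff_isStrictlyPositive.mpr hP.isStrictlyPositive⟩
  rw [one_sub_mul_conjTranspose_mul_inv_mul_eq_conj hPT hT]
  set C := 1 - (H * T)ᴴ * (H * T * (H * T)ᴴ + R)⁻¹ * (H * T)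
  have hC : C.PosDef := hR.one_sub_conjTranspose_mul_inv_mul (H * T)
  have h1C : (1 - C).PosDef := by
    rw [sub_sub_cancel]
    exact hR.conjTranspose_mul_inv_mul (hH.mul hT)
  set U := (hC.isHermitian.eigenvectorUnitary : Matrix n n 𝕜)
  have hU : IsUnit U := .of_mul_eq_one _ (Unitary.coe_mul_star_self _)
  refine ⟨T * U, hC.isHermitian.eigenvalues, hT.mul hU, ?_,
    fun i => ⟨hC.eigenvalues_pos i, hC.isHermitian.eigenvalues_lt_one h1C i⟩⟩
  conv_lhs => rw [hC.isHermitian.eq_conj_diagonal_eigenvalues]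
  simp only [Matrix.mul_inv_rev, U, Matrix.mul_assoc]

theorem stmt_6 {d : ℕ} (R P H : Matrix (Fin d) (Fin d) ℝ)
    (hR : R.PosDef) (hP : P.PosDef) (hH : IsUnit H)
    (K : Matrix (Fin d) (Fin d) ℝ) (hK : K = P * Hᵀ * (H * P * Hᵀ + R)⁻¹)
    (y : Fin d → ℝ) (u : ℕ → Fin d → ℝ)
    (hrec : ∀ i, u (i + 1) = (1 - K * H) *ᵥ u i + K *ᵥ y) :
    (∀ z ∈ spectrum ℂ ((1 - K * H).map (algebraMap ℝ ℂ)), ‖z‖ < 1) ∧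
    (∀ ustar : Fin d → ℝ, H *ᵥ ustar = y →
      Tendsto u atTop (nhds ustar)) := by
  obtain ⟨W, μ, hW, hconj, hμ⟩ := exists_conj_diagonal_one_sub_kalmanGain_mul hR hP hH
  simp only [conjTranspose_eq_transpose_of_trivial, RCLike.ofReal_real_eq_id,
    Function.id_comp, ← hK] at hconj
  have hμ_norm : ∀ i, ‖μ i‖ < 1 := fun i => by
    rw [Real.norm_of_nonneg (hμ i).1.le]
    exact (hμ i).2
  refine ⟨?_, fun ustar hustar => ?_⟩
  · rw [hconj, spectrum_map_conj_diagonal hW]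
    rintro _ ⟨i, rfl⟩
    simpa using hμ_norm i
  · refine tendsto_of_affine_recurrence hrec ?_ (hconj ▸ tendsto_pow_conj_diagonal hW hμ_norm)
    rw [sub_mulVec, one_mulVec, ← mulVec_mulVec, hustar, sub_add_cancel]
end

section
/- Let m : [0,∞) → ℝ^d and C : [0,∞) → ℝ^{d×d} solve the ODE system dm/dt = C(t) H^T R^{-1} (y - H m(t)), dC/dt = -C(t) H^T R^{-1} H C(t), with C(0) symmetric positive definite. Then for all t ≥ 0, C(t) = (C(0)^{-1} + t H^T R^{-1} H)^{-1} and m(t) = (C(0)^{-1} + t H^T R^{-1} H)^{-1} (C(0)^{-1} m(0) + t H^T R^{-1} y). -/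
/-!
Write `A = Hᵀ R⁻¹ H` and `B t = C(0)⁻¹ + t A`. The defect `G = 1 - B C` satisfies the linear
equation `G' = -G A C` with `G 0 = 0`, so Gronwall's inequality forces `B t * C t = 1`; in particular
`B t` is invertible with inverse `C t`. Once `B C = 1`, the mean equation gives
`(B m)' = A m + B C (Hᵀ R⁻¹ y - A m) = Hᵀ R⁻¹ y`, hence `B t m t = C(0)⁻¹ m 0 + t Hᵀ R⁻¹ y`.
-/

open Matrix Set

section NormedRing

variable {𝔸 : Type*} [NormedRing 𝔸]

theorem eq_zero_of_hasDerivWithinAt_mul_right [NormedSpace ℝ 𝔸] {G M : ℝ → 𝔸} {a : ℝ}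
    (hM : ContinuousOn M (Ici a)) (hG : ∀ x ∈ Ici a, HasDerivWithinAt G (G x * M x) (Ici a) x)
    (ha : G a = 0) : ∀ b ∈ Ici a, G b = 0 := by
  intro b hb
  obtain ⟨K, hK⟩ :=
    isCompact_Icc.exists_bound_of_continuousOn (hM.mono (Icc_subset_Ici_self : Icc a b ⊆ Ici a))
  have hbound : ∀ x ∈ Ico a b, ‖G x * M x‖ ≤ K * ‖G x‖ + 0 := fun x hx =>
    calc ‖G x * M x‖ ≤ ‖G x‖ * ‖M x‖ := norm_mul_le _ _
      _ ≤ ‖G x‖ * K := by gcongr; exact hK x (Ico_subset_Icc_self hx)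
      _ = K * ‖G x‖ + 0 := by ring
  have hGb := norm_le_gronwallBound_of_norm_deriv_right_le
    (fun x hx => (hG x hx.1).continuousWithinAt.mono Icc_subset_Ici_self)
    (fun x hx => (hG x hx.1).mono (Ici_subset_Ici.2 hx.1)) (by rw [ha, norm_zero]) hbound b
    ⟨hb, le_rfl⟩
  rwa [gronwallBound_ε0_δ0, norm_le_zero_iff] at hGb

theorem add_smul_mul_eq_one_of_hasDerivWithinAt [NormedAlgebra ℝ 𝔸] {P A : 𝔸} {C : ℝ → 𝔸}
    (hC : ∀ t ∈ Ici 0, HasDerivWithinAt C (-(C t * A * C t)) (Ici 0) t) (h0 : P * C 0 = 1) :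
    ∀ t ∈ Ici 0, (P + t • A) * C t = 1 := by
  set G : ℝ → 𝔸 := fun s => 1 - (P + s • A) * C s
  have hG : ∀ t ∈ Ici 0, HasDerivWithinAt G (G t * -(A * C t)) (Ici 0) t := by
    intro t ht
    have hB : HasDerivWithinAt (fun s : ℝ => P + s • A) A (Ici 0) t := by
      simpa using ((hasDerivWithinAt_id t (Ici 0)).smul_const A).const_add P
    exact ((hB.mul (hC t ht)).const_sub 1).congr_deriv (by simp only [G]; noncomm_ring)
  have hM : ContinuousOn (fun t => -(A * C t)) (Ici 0) :=
    (continuousOn_const.mul fun t ht => (hC t ht).continuousWithinAt).neg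
  intro t ht
  exact (sub_eq_zero.1 (eq_zero_of_hasDerivWithinAt_mul_right hM hG (by simp [G, h0]) t ht)).symm

end NormedRing

section MatrixDerivative

variable {𝕜 : Type*} [NontriviallyNormedField 𝕜] {ι κ : Type*} [Fintype κ] {S : Set 𝕜} {t : 𝕜}

theorem hasDerivWithinAt_mulVec_of_apply {P : 𝕜 → Matrix ι κ 𝕜} {P' : Matrix ι κ 𝕜}
    {v : 𝕜 → κ → 𝕜} {v' : κ → 𝕜} (hP : ∀ i j, HasDerivWithinAt (fun s => P s i j) (P' i j) S t)
    (hv : ∀ j, HasDerivWithinAt (fun s => v s j) (v' j) S t) :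
    HasDerivWithinAt (fun s => P s *ᵥ v s) (P' *ᵥ v t + P t *ᵥ v') S t := by
  refine hasDerivWithinAt_pi.2 fun i => ?_
  simp only [mulVec, dotProduct, Pi.add_apply, ← Finset.sum_add_distrib]
  exact HasDerivWithinAt.fun_sum fun j _ => (hP i j).mul (hv j)

variable [Fintype ι] [DecidableEq ι]

attribute [local instance] Matrix.linftyOpNormedAddCommGroup Matrix.linftyOpNormedSpace
  Matrix.linftyOpNormedRing Matrix.linftyOpNormedAlgebra

theorem Matrix.hasDerivWithinAt_of_apply [DecidableEq κ] {f : 𝕜 → Matrix ι κ 𝕜}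
    {f' : Matrix ι κ 𝕜} (h : ∀ i j, HasDerivWithinAt (fun s => f s i j) (f' i j) S t) :
    HasDerivWithinAt f f' S t := by
  have hsum (M : Matrix ι κ 𝕜) : M = ∑ i, ∑ j, M i j • single i j (1 : 𝕜) := by
    simpa only [smul_single, smul_eq_mul, mul_one] using matrix_eq_sum_single M
  rw [funext fun s => hsum (f s), hsum f']
  exact HasDerivWithinAt.fun_sum fun i _ => HasDerivWithinAt.fun_sum fun j _ =>
    (h i j).smul_const (single i j 1)

theorem Matrix.inv_add_smul_mul_eq_one_of_hasDerivWithinAt {A : Matrix ι ι ℝ}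
    {C : ℝ → Matrix ι ι ℝ} (hC0 : IsUnit (C 0))
    (hC : ∀ t ∈ Ici 0, ∀ i j,
      HasDerivWithinAt (fun s => C s i j) ((-(C t * A * C t)) i j) (Ici 0) t) :
    ∀ t ∈ Ici 0, ((C 0)⁻¹ + t • A) * C t = 1 :=
  add_smul_mul_eq_one_of_hasDerivWithinAt (fun t ht => hasDerivWithinAt_of_apply (hC t ht))
    (nonsing_inv_mul _ ((isUnit_iff_isUnit_det _).1 hC0))

end MatrixDerivative

theorem Matrix.add_smul_mulVec_eq_of_hasDerivWithinAt {ι : Type*} [Fintype ι] [DecidableEq ι]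
    {P A : Matrix ι ι ℝ} {C : ℝ → Matrix ι ι ℝ} {m : ℝ → ι → ℝ} {v : ι → ℝ}
    (hBC : ∀ t ∈ Ici 0, (P + t • A) * C t = 1)
    (hm : ∀ t ∈ Ici 0, ∀ i,
      HasDerivWithinAt (fun s => m s i) ((C t *ᵥ (v - A *ᵥ m t)) i) (Ici 0) t) :
    ∀ t ∈ Ici 0, (P + t • A) *ᵥ m t = P *ᵥ m 0 + t • v := by
  have hB (t : ℝ) (i j : ι) :
      HasDerivWithinAt (fun s : ℝ => (P + s • A) i j) (A i j) (Ici 0) t := by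
    simpa using ((hasDerivWithinAt_id t (Ici 0)).mul_const (A i j)).const_add (P i j)
  have hf : ∀ t ∈ Ici 0, HasDerivWithinAt (fun s => (P + s • A) *ᵥ m s) v (Ici 0) t := by
    intro t ht
    refine (hasDerivWithinAt_mulVec_of_apply (hB t) (hm t ht)).congr_deriv ?_
    rw [mulVec_mulVec, hBC t ht, one_mulVec, add_sub_cancel]
  have hg (S : Set ℝ) (t : ℝ) : HasDerivWithinAt (fun s : ℝ => P *ᵥ m 0 + s • v) v S t := by
    simpa using ((hasDerivWithinAt_id t S).smul_const v).const_add (P *ᵥ m 0)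
  intro t ht
  exact eq_of_has_deriv_right_eq (fun x hx => (hf x hx.1).mono (Ici_subset_Ici.2 hx.1))
    (fun x _ => hg _ x) (fun x hx => (hf x hx.1).continuousWithinAt.mono Icc_subset_Ici_self)
    (fun x _ => (hg _ x).continuousWithinAt) (by simp) t ⟨ht, le_rfl⟩

theorem stmt_8_general {k d : ℕ} (H : Matrix (Fin k) (Fin d) ℝ) (R : Matrix (Fin k) (Fin k) ℝ)
    (y : Fin k → ℝ)
    (m : ℝ → Fin d → ℝ) (C : ℝ → Matrix (Fin d) (Fin d) ℝ)
    (hC0 : (C 0).PosDef)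
    (hm : ∀ t ∈ Set.Ici (0 : ℝ), ∀ i,
      HasDerivWithinAt (fun s => m s i)
        ((C t *ᵥ (Hᵀ *ᵥ (R⁻¹ *ᵥ (y - H *ᵥ m t)))) i) (Set.Ici 0) t)
    (hCd : ∀ t ∈ Set.Ici (0 : ℝ), ∀ i j,
      HasDerivWithinAt (fun s => C s i j)
        ((-(C t * (Hᵀ * R⁻¹ * H) * C t)) i j) (Set.Ici 0) t) :
    ∀ t ∈ Set.Ici (0 : ℝ),
      C t = ((C 0)⁻¹ + t • (Hᵀ * R⁻¹ * H))⁻¹ ∧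
      m t = ((C 0)⁻¹ + t • (Hᵀ * R⁻¹ * H))⁻¹ *ᵥ
        ((C 0)⁻¹ *ᵥ m 0 + t • (Hᵀ *ᵥ (R⁻¹ *ᵥ y))) := by
  have hBC := inv_add_smul_mul_eq_one_of_hasDerivWithinAt hC0.isUnit hCd
  have hBm := add_smul_mulVec_eq_of_hasDerivWithinAt hBC (m := m) (v := Hᵀ *ᵥ (R⁻¹ *ᵥ y))
    fun t ht i => by simpa only [mulVec_sub, mulVec_mulVec, Matrix.mul_assoc] using hm t ht i
  intro t ht
  have hC : C t = ((C 0)⁻¹ + t • (Hᵀ * R⁻¹ * H))⁻¹ := (inv_eq_right_inv (hBC t ht)).symm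
  refine ⟨hC, ?_⟩
  rw [← hC, ← hBm t ht, mulVec_mulVec, mul_eq_one_comm.1 (hBC t ht), one_mulVec]

theorem stmt_8 {k d : ℕ} (H : Matrix (Fin k) (Fin d) ℝ) (R : Matrix (Fin k) (Fin k) ℝ)
    (hR : R.PosDef) (y : Fin k → ℝ)
    (m : ℝ → Fin d → ℝ) (C : ℝ → Matrix (Fin d) (Fin d) ℝ)
    (hC0 : (C 0).PosDef)
    (hm : ∀ t ∈ Set.Ici (0 : ℝ), ∀ i,
      HasDerivWithinAt (fun s => m s i)
        ((C t *ᵥ (Hᵀ *ᵥ (R⁻¹ *ᵥ (y - H *ᵥ m t)))) i) (Set.Ici 0) t)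
    (hCd : ∀ t ∈ Set.Ici (0 : ℝ), ∀ i j,
      HasDerivWithinAt (fun s => C s i j)
        ((-(C t * (Hᵀ * R⁻¹ * H) * C t)) i j) (Set.Ici 0) t) :
    ∀ t ∈ Set.Ici (0 : ℝ),
      C t = ((C 0)⁻¹ + t • (Hᵀ * R⁻¹ * H))⁻¹ ∧
      m t = ((C 0)⁻¹ + t • (Hᵀ * R⁻¹ * H))⁻¹ *ᵥ
        ((C 0)⁻¹ *ᵥ m 0 + t • (Hᵀ *ᵥ (R⁻¹ *ᵥ y))) :=
  stmt_8_general H R y m C hC0 hm hCd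
end

section
/- Let H ∈ ℝ^{k×d} have full column rank, R symmetric positive definite, C(0) symmetric positive definite, and m(t) = (C(0)^{-1} + t H^T R^{-1} H)^{-1} (C(0)^{-1} m(0) + t H^T R^{-1} y). Then m(t) → (H^T R^{-1} H)^{-1} H^T R^{-1} y as t → ∞. -/
open Matrix Filter Topology

/-!
Full column rank of `H` makes `A = Hᵀ R⁻¹ H` positive definite, hence invertible. Dividing by `t`,
`m t = f t⁻¹` with `f s = (s • C0⁻¹ + A)⁻¹ *ᵥ (s • C0⁻¹ m0 + Hᵀ R⁻¹ y)`, and `f` is continuous at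
`s = 0` because matrix inversion is continuous at the invertible matrix `A`; so `m t → f 0`.
-/

namespace Matrix

variable {m n K : Type*}

theorem mulVec_injective_of_rank_eq_card [Fintype n] [Field K] {A : Matrix m n K}
    (h : A.rank = Fintype.card n) : Function.Injective A.mulVec := by
  have hker : Module.finrank K (LinearMap.ker A.mulVecLin) = 0 := by
    have := A.mulVecLin.finrank_range_add_finrank_ker
    rw [Module.finrank_fintype_fun_eq_card] at this
    change A.rank + _ = _ at this
    omega
  rw [← Matrix.coe_mulVecLin, ← LinearMap.ker_eq_bot]
  exact Submodule.finrank_eq_zero.mp hker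

theorem PosDef.transpose_mul_mul_of_rank_eq_card [Fintype m] [Fintype n] {R : Matrix m m ℝ}
    (hR : R.PosDef) {H : Matrix m n ℝ} (hH : H.rank = Fintype.card n) : (Hᵀ * R * H).PosDef := by
  simpa only [conjTranspose_eq_transpose_of_trivial] using
    hR.conjTranspose_mul_mul_same (mulVec_injective_of_rank_eq_card hH)

theorem inv_smul_of_ne_zero [Fintype n] [DecidableEq n] [Field K] (A : Matrix n n K) {c : K}
    (hc : c ≠ 0) : (c • A)⁻¹ = c⁻¹ • A⁻¹ := by
  by_cases hA : IsUnit A.det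
  · exact inv_smul' A (Units.mk0 c hc) hA
  · have hcA : ¬IsUnit (c • A).det := by
      rw [det_smul]
      exact fun h => hA (isUnit_of_mul_isUnit_right h)
    rw [nonsing_inv_apply_not_isUnit _ hA, nonsing_inv_apply_not_isUnit _ hcA, smul_zero]

theorem tendsto_inv_add_smul_mulVec_add_smul_atTop [Fintype n] [DecidableEq n]
    {A : Matrix n n ℝ} (hA : IsUnit A.det) (B : Matrix n n ℝ) (u w : n → ℝ) :
    Tendsto (fun t : ℝ => (B + t • A)⁻¹ *ᵥ (u + t • w)) atTop (𝓝 (A⁻¹ *ᵥ w)) := by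
  have hmat : Tendsto (fun s : ℝ => s • B + A) (𝓝 0) (𝓝 A) :=
    (by fun_prop : Continuous fun s : ℝ => s • B + A).tendsto' 0 A (by simp)
  have hvec : Tendsto (fun s : ℝ => s • u + w) (𝓝 0) (𝓝 w) :=
    (by fun_prop : Continuous fun s : ℝ => s • u + w).tendsto' 0 w (by simp)
  have hinv : ContinuousAt Inv.inv A :=
    continuousAt_matrix_inv A (Ring.inverse_eq_inv' (G₀ := ℝ) ▸ continuousAt_inv₀ hA.ne_zero)
  have hlim : Tendsto (fun s : ℝ => (s • B + A)⁻¹ *ᵥ (s • u + w)) (𝓝 0) (𝓝 (A⁻¹ *ᵥ w)) :=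
    (continuous_fst.matrix_mulVec continuous_snd).continuousAt.tendsto.comp
      ((hinv.tendsto.comp hmat).prodMk_nhds hvec)
  refine (hlim.comp tendsto_inv_atTop_zero).congr' ?_
  filter_upwards [eventually_ne_atTop 0] with t ht
  have hmat_t : B + t • A = t • (t⁻¹ • B + A) := by
    rw [smul_add, smul_smul, mul_inv_cancel₀ ht, one_smul]
  have hvec_t : u + t • w = t • (t⁻¹ • u + w) := by
    rw [smul_add, smul_smul, mul_inv_cancel₀ ht, one_smul]
  rw [Function.comp_apply, hmat_t, hvec_t, inv_smul_of_ne_zero _ ht, smul_mulVec, mulVec_smul,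
    smul_smul, inv_mul_cancel₀ ht, one_smul]

end Matrix

theorem stmt_10_general {k d : ℕ} (H : Matrix (Fin k) (Fin d) ℝ) (R : Matrix (Fin k) (Fin k) ℝ)
    (hR : R.PosDef) (C0 : Matrix (Fin d) (Fin d) ℝ)
    (hrank : H.rank = d) (y : Fin k → ℝ) (m0 : Fin d → ℝ)
    (m : ℝ → Fin d → ℝ)
    (hm : ∀ t, m t = (C0⁻¹ + t • (Hᵀ * R⁻¹ * H))⁻¹ *ᵥ
      (C0⁻¹ *ᵥ m0 + t • (Hᵀ *ᵥ (R⁻¹ *ᵥ y)))) :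
    Tendsto m atTop (nhds ((Hᵀ * R⁻¹ * H)⁻¹ *ᵥ (Hᵀ *ᵥ (R⁻¹ *ᵥ y)))) := by
  have hpos : (Hᵀ * R⁻¹ * H).PosDef :=
    hR.inv.transpose_mul_mul_of_rank_eq_card (by rwa [Fintype.card_fin])
  rw [funext hm]
  exact tendsto_inv_add_smul_mulVec_add_smul_atTop hpos.det_pos.ne'.isUnit _ _ _

theorem stmt_10 {k d : ℕ} (H : Matrix (Fin k) (Fin d) ℝ) (R : Matrix (Fin k) (Fin k) ℝ)
    (hR : R.PosDef) (C0 : Matrix (Fin d) (Fin d) ℝ) (hC0 : C0.PosDef)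
    (hrank : H.rank = d) (y : Fin k → ℝ) (m0 : Fin d → ℝ)
    (m : ℝ → Fin d → ℝ)
    (hm : ∀ t, m t = (C0⁻¹ + t • (Hᵀ * R⁻¹ * H))⁻¹ *ᵥ
      (C0⁻¹ *ᵥ m0 + t • (Hᵀ *ᵥ (R⁻¹ *ᵥ y)))) :
    Tendsto m atTop (nhds ((Hᵀ * R⁻¹ * H)⁻¹ *ᵥ (Hᵀ *ᵥ (R⁻¹ *ᵥ y)))) :=
  stmt_10_general H R hR C0 hrank y m0 m hm
end

section
/- Let m̃ : [0,∞) → ℝ^k and C̃ : [0,∞) → ℝ^{k×k} solve dm̃/dt = C̃(t)(b - m̃(t)) and dC̃/dt = -C̃(t)², with C̃(0) symmetric positive definite. Then m̃(t) = (C̃(0)^{-1} + tI)^{-1} (C̃(0)^{-1} m̃(0) + t b), and m̃(t) → b as t → ∞. -/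
/-!
With `A t = C̃(0)⁻¹ + t • 1`, the defect `E = 1 - A * C̃` solves the linear equation
`E' = -E * C̃` with `E 0 = 0`, so Gronwall's inequality forces `A t * C̃ t = 1`, i.e.
`C̃ t = (A t)⁻¹`. Then `A t *ᵥ (m̃ t - b)` has derivative `(m̃ - b) + A C̃ (b - m̃) = 0`, so
`m̃ t - b = C̃ t *ᵥ C̃(0)⁻¹ *ᵥ (m̃ 0 - b)`, which gives the formula, and `‖C̃ t‖ = O(1/t)`
(read off from `t • C̃ t = 1 - C̃(0)⁻¹ * C̃ t`) gives the limit.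
-/

open Matrix Filter Set Topology

section NormedRing

variable {R : Type*} [NormedRing R] [NormedAlgebra ℝ R]

theorem eq_zero_of_hasDerivWithinAt_mul_right_s12 {E D : ℝ → R} {a : ℝ}
    (hD : ContinuousOn D (Ici a))
    (hE : ∀ t ∈ Ici a, HasDerivWithinAt E (E t * D t) (Ici a) t) (hE₀ : E a = 0) :
    ∀ t ∈ Ici a, E t = 0 := by
  intro T hT
  obtain ⟨K, hK⟩ :=
    isCompact_Icc.exists_bound_of_continuousOn (hD.mono (Icc_subset_Ici_self : Icc a T ⊆ Ici a))
  have hEcont : ContinuousOn E (Icc a T) := fun t ht =>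
    (hE t ht.1).continuousWithinAt.mono Icc_subset_Ici_self
  have hbound : ∀ t ∈ Ico a T, ‖E t * D t‖ ≤ K * ‖E t‖ + 0 := fun t ht => by
    rw [add_zero, mul_comm K]
    exact (norm_mul_le _ _).trans
      (mul_le_mul_of_nonneg_left (hK t (Ico_subset_Icc_self ht)) (norm_nonneg _))
  have := norm_le_gronwallBound_of_norm_deriv_right_le hEcont
    (fun t ht => (hE t ht.1).mono (Ici_subset_Ici.2 ht.1)) (by rw [hE₀, norm_zero]) hbound T
    (right_mem_Icc.2 hT)
  simpa [gronwallBound_ε0_δ0] using this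

theorem hasDerivWithinAt_const_add_smul_one (a : R) (s : Set ℝ) (t : ℝ) :
    HasDerivWithinAt (fun u : ℝ => a + u • (1 : R)) 1 s t := by
  simpa only [one_smul, id] using ((hasDerivWithinAt_id t s).smul_const (1 : R)).const_add a

theorem add_smul_one_mul_eq_one_of_hasDerivWithinAt {C : ℝ → R} {a : R}
    (hC : ∀ t ∈ Ici (0 : ℝ), HasDerivWithinAt C (-(C t * C t)) (Ici 0) t) (ha : a * C 0 = 1) :
    ∀ t ∈ Ici (0 : ℝ), (a + t • 1) * C t = 1 := by
  set E : ℝ → R := fun t => 1 - (a + t • 1) * C t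
  have hE : ∀ t ∈ Ici (0 : ℝ), HasDerivWithinAt E (E t * -C t) (Ici 0) t := fun t ht =>
    (((hasDerivWithinAt_const_add_smul_one a _ t).fun_mul (hC t ht)).const_sub 1).congr_deriv
      (by simp only [E]; noncomm_ring)
  have hE₀ : E 0 = 0 := by simp [E, ha]
  intro t ht
  exact (sub_eq_zero.1 (eq_zero_of_hasDerivWithinAt_mul_right_s12
    (fun t ht => (hC t ht).continuousWithinAt.neg) hE hE₀ t ht)).symm

theorem norm_le_of_add_smul_one_mul_eq_one {a c : R} {t : ℝ} (h : (a + t • 1) * c = 1)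
    (ht : ‖a‖ < t) : ‖c‖ ≤ ‖(1 : R)‖ / (t - ‖a‖) := by
  rw [le_div_iff₀ (sub_pos.2 ht)]
  have htc : t • c = 1 - a * c := by
    rw [← h, add_mul, smul_one_mul]
    abel
  have : t * ‖c‖ ≤ ‖(1 : R)‖ + ‖a‖ * ‖c‖ := calc
    t * ‖c‖ = ‖t • c‖ := by rw [norm_smul, Real.norm_of_nonneg ((norm_nonneg a).trans ht.le)]
    _ = ‖1 - a * c‖ := by rw [htc]
    _ ≤ ‖(1 : R)‖ + ‖a‖ * ‖c‖ := (norm_sub_le _ _).trans (add_le_add_right (norm_mul_le _ _) _)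
  linarith

theorem tendsto_zero_of_add_smul_one_mul_eq_one {C : ℝ → R} {a : R}
    (h : ∀ t ∈ Ici (0 : ℝ), (a + t • 1) * C t = 1) : Tendsto C atTop (𝓝 0) := by
  refine squeeze_zero_norm' (a := fun t => ‖(1 : R)‖ / (t - ‖a‖)) ?_
    (tendsto_const_nhds.div_atTop (tendsto_atTop_add_const_right _ (-‖a‖) tendsto_id))
  filter_upwards [eventually_gt_atTop ‖a‖] with t ht
  exact norm_le_of_add_smul_one_mul_eq_one (h t ((norm_nonneg a).trans ht.le)) ht

end NormedRing

section Matrix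

attribute [local instance] Matrix.linftyOpNormedRing Matrix.linftyOpNormedAlgebra

variable {n : Type*} [Fintype n] [DecidableEq n]

theorem Matrix.hasDerivWithinAt_iff {M : ℝ → Matrix n n ℝ} {M' : Matrix n n ℝ} {s : Set ℝ}
    {t : ℝ} :
    HasDerivWithinAt M M' s t ↔ ∀ i j, HasDerivWithinAt (fun u => M u i j) (M' i j) s t := by
  refine hasDerivWithinAt_iff_tendsto_slope.trans ?_
  simp only [hasDerivWithinAt_iff_tendsto_slope]
  exact tendsto_pi_nhds.trans (forall_congr' fun _ => tendsto_pi_nhds)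

theorem HasDerivWithinAt.matrix_mulVec {M : ℝ → Matrix n n ℝ} {M' : Matrix n n ℝ}
    {v : ℝ → n → ℝ} {v' : n → ℝ} {s : Set ℝ} {t : ℝ}
    (hM : HasDerivWithinAt M M' s t) (hv : HasDerivWithinAt v v' s t) :
    HasDerivWithinAt (fun u => M u *ᵥ v u) (M' *ᵥ v t + M t *ᵥ v') s t := by
  refine hasDerivWithinAt_pi.2 fun i => ?_
  have := HasDerivWithinAt.fun_sum fun j (_ : j ∈ Finset.univ) =>
    (Matrix.hasDerivWithinAt_iff.1 hM i j).fun_mul (hasDerivWithinAt_pi.1 hv j)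
  simpa [mulVec, dotProduct, Finset.sum_add_distrib] using this

theorem Matrix.inv_add_smul_one_mul_eq_one_of_hasDerivWithinAt {C : ℝ → Matrix n n ℝ}
    (hC₀ : IsUnit (C 0))
    (hC : ∀ t ∈ Ici (0 : ℝ), ∀ i j,
      HasDerivWithinAt (fun s => C s i j) ((-(C t * C t)) i j) (Ici 0) t) :
    ∀ t ∈ Ici (0 : ℝ), ((C 0)⁻¹ + t • 1) * C t = 1 :=
  add_smul_one_mul_eq_one_of_hasDerivWithinAt
    (fun t ht => Matrix.hasDerivWithinAt_iff.2 (hC t ht))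
    (nonsing_inv_mul _ ((C 0).isUnit_iff_isUnit_det.1 hC₀))

theorem Matrix.add_smul_one_mulVec_sub_eq {a : Matrix n n ℝ} {C : ℝ → Matrix n n ℝ}
    {m : ℝ → n → ℝ} {b : n → ℝ} (hAC : ∀ t ∈ Ici (0 : ℝ), (a + t • 1) * C t = 1)
    (hm : ∀ t ∈ Ici (0 : ℝ), HasDerivWithinAt m (C t *ᵥ (b - m t)) (Ici 0) t) :
    ∀ t ∈ Ici (0 : ℝ), (a + t • 1) *ᵥ (m t - b) = a *ᵥ (m 0 - b) := by
  set w : ℝ → n → ℝ := fun t => (a + t • 1) *ᵥ (m t - b)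
  have hw : ∀ t ∈ Ici (0 : ℝ), HasDerivWithinAt w 0 (Ici 0) t := fun t ht =>
    ((hasDerivWithinAt_const_add_smul_one a _ t).matrix_mulVec ((hm t ht).sub_const b)).congr_deriv
      (by rw [mulVec_mulVec, hAC t ht, one_mulVec, one_mulVec, ← neg_sub, neg_add_cancel])
  intro t ht
  have := constant_of_has_deriv_right_zero
    (fun s hs => (hw s hs.1).continuousWithinAt.mono Icc_subset_Ici_self)
    (fun s hs => (hw s hs.1).mono (Ici_subset_Ici.2 hs.1)) t (right_mem_Icc.2 ht)
  simpa [w] using this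

theorem Matrix.tendsto_mulVec_zero_of_add_smul_one_mul_eq_one {a : Matrix n n ℝ}
    {C : ℝ → Matrix n n ℝ} (hAC : ∀ t ∈ Ici (0 : ℝ), (a + t • 1) * C t = 1) (u : n → ℝ) :
    Tendsto (fun t => C t *ᵥ u) atTop (𝓝 0) := by
  have hcont : Continuous fun M : Matrix n n ℝ => M *ᵥ u :=
    continuous_id.matrix_mulVec continuous_const
  simpa [Function.comp_def] using
    (hcont.tendsto 0).comp (tendsto_zero_of_add_smul_one_mul_eq_one hAC)

end Matrix

theorem stmt_12 {k : ℕ} (b : Fin k → ℝ)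
    (m : ℝ → Fin k → ℝ) (C : ℝ → Matrix (Fin k) (Fin k) ℝ)
    (hC0 : (C 0).PosDef)
    (hmd : ∀ t ∈ Set.Ici (0 : ℝ), ∀ i,
      HasDerivWithinAt (fun s => m s i) ((C t *ᵥ (b - m t)) i) (Set.Ici 0) t)
    (hCd : ∀ t ∈ Set.Ici (0 : ℝ), ∀ i j,
      HasDerivWithinAt (fun s => C s i j) ((-(C t * C t)) i j) (Set.Ici 0) t) :
    (∀ t ∈ Set.Ici (0 : ℝ),
      m t = ((C 0)⁻¹ + t • (1 : Matrix (Fin k) (Fin k) ℝ))⁻¹ *ᵥ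
        ((C 0)⁻¹ *ᵥ m 0 + t • b)) ∧
    Tendsto m atTop (nhds b) := by
  have hAC := Matrix.inv_add_smul_one_mul_eq_one_of_hasDerivWithinAt hC0.isUnit hCd
  have hCA : ∀ t ∈ Ici (0 : ℝ), C t * ((C 0)⁻¹ + t • 1) = 1 := fun t ht =>
    mul_eq_one_comm.1 (hAC t ht)
  have hconst := Matrix.add_smul_one_mulVec_sub_eq hAC fun t ht => hasDerivWithinAt_pi.2 (hmd t ht)
  set u := (C 0)⁻¹ *ᵥ (m 0 - b) with hu
  have hm : ∀ t ∈ Ici (0 : ℝ), m t = b + C t *ᵥ u := fun t ht => by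
    rw [← hconst t ht, mulVec_mulVec, hCA t ht, one_mulVec, add_sub_cancel]
  refine ⟨fun t ht => ?_, ?_⟩
  · calc m t = C t *ᵥ (((C 0)⁻¹ + t • 1) *ᵥ b + u) := by
          rw [hm t ht, mulVec_add, mulVec_mulVec b, hCA t ht, one_mulVec]
      _ = _ := by
          rw [inv_eq_right_inv (hAC t ht), hu, add_mulVec, smul_mulVec, one_mulVec, mulVec_sub]
          congr 1
          abel
  · have hlim := (Matrix.tendsto_mulVec_zero_of_add_smul_one_mul_eq_one hAC u).const_add b
    rw [add_zero] at hlim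
    exact hlim.congr' ((eventually_ge_atTop 0).mono fun t ht => (hm t ht).symm)
end

section
/- Let P, R be symmetric positive definite, H a matrix, and define C_i = (P^{-1} + H^T R^{-1} H)^{-1}. Then for α > 0, (H^T R^{-1} H + α^{-1} C_i^{-1})^{-1} H^T R^{-1} = α P H^T ((1 + α) H P H^T + R)^{-1}. -/
/-!
With `Cᵢ⁻¹ = P⁻¹ + Hᵀ R⁻¹ H`, the matrix to invert is `α⁻¹ ((1 + α) Hᵀ R⁻¹ H + P⁻¹)`, so the claim is
the Kalman gain identity `(c Hᵀ R⁻¹ H + P⁻¹)⁻¹ Hᵀ R⁻¹ = P Hᵀ (c H P Hᵀ + R)⁻¹` with weight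
`c = 1 + α`. That identity is the push-through of `(c Hᵀ R⁻¹ H + P⁻¹) P Hᵀ = Hᵀ R⁻¹ (c H P Hᵀ + R)`,
and positive definiteness makes every matrix involved invertible.
-/

open Matrix

namespace Matrix

section Field

variable {K : Type*} [Field K] {m n : Type*} [Fintype m] [Fintype n] [DecidableEq m]
  [DecidableEq n]

theorem inv_mul_eq_mul_inv_of_mul_eq {A : Matrix n n K} {B : Matrix m m K}
    {X Y : Matrix n m K} (hA : IsUnit A) (hB : IsUnit B) (h : A * X = Y * B) :
    A⁻¹ * Y = X * B⁻¹ :=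
  calc A⁻¹ * Y = A⁻¹ * (Y * B) * B⁻¹ := by
        rw [Matrix.mul_assoc, mul_nonsing_inv_cancel_right B Y ((isUnit_iff_isUnit_det B).mp hB)]
    _ = X * B⁻¹ := by rw [← h, nonsing_inv_mul_cancel_left A X ((isUnit_iff_isUnit_det A).mp hA)]

theorem kalman_gain_identity {P : Matrix n n K} {R : Matrix m m K} (H : Matrix m n K) (c : K)
    (hP : IsUnit P) (hR : IsUnit R) (hN : IsUnit (c • (Hᵀ * R⁻¹ * H) + P⁻¹))
    (hS : IsUnit (c • (H * P * Hᵀ) + R)) :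
    (c • (Hᵀ * R⁻¹ * H) + P⁻¹)⁻¹ * (Hᵀ * R⁻¹) = P * Hᵀ * (c • (H * P * Hᵀ) + R)⁻¹ := by
  refine inv_mul_eq_mul_inv_of_mul_eq hN hS ?_
  simp only [Matrix.add_mul, Matrix.mul_add, Matrix.smul_mul, Matrix.mul_smul, Matrix.mul_assoc,
    nonsing_inv_mul_cancel_left P _ ((isUnit_iff_isUnit_det P).mp hP),
    nonsing_inv_mul R ((isUnit_iff_isUnit_det R).mp hR), Matrix.mul_one]

end Field

variable {m n : Type*} [Fintype m] [Fintype n] [DecidableEq m]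

theorem PosDef.posSemidef_transpose_mul_inv_mul {R : Matrix m m ℝ} (hR : R.PosDef)
    (H : Matrix m n ℝ) : (Hᵀ * R⁻¹ * H).PosSemidef := by
  simpa using hR.inv.posSemidef.conjTranspose_mul_mul_same H

variable [DecidableEq n]

theorem PosDef.smul_transpose_mul_inv_mul_add_inv {P : Matrix n n ℝ} {R : Matrix m m ℝ}
    (H : Matrix m n ℝ) {c : ℝ} (hP : P.PosDef) (hR : R.PosDef) (hc : 0 ≤ c) :
    (c • (Hᵀ * R⁻¹ * H) + P⁻¹).PosDef :=
  PosDef.posSemidef_add ((hR.posSemidef_transpose_mul_inv_mul H).smul hc) hP.inv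

theorem PosDef.kalman_gain_identity {P : Matrix n n ℝ} {R : Matrix m m ℝ} (H : Matrix m n ℝ)
    {c : ℝ} (hP : P.PosDef) (hR : R.PosDef) (hc : 0 ≤ c) :
    (c • (Hᵀ * R⁻¹ * H) + P⁻¹)⁻¹ * (Hᵀ * R⁻¹) = P * Hᵀ * (c • (H * P * Hᵀ) + R)⁻¹ := by
  have hHPH : (H * P * Hᵀ).PosSemidef := by
    simpa using hP.posSemidef.mul_mul_conjTranspose_same H
  exact Matrix.kalman_gain_identity H c hP.isUnit hR.isUnit
    (PosDef.smul_transpose_mul_inv_mul_add_inv H hP hR hc).isUnit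
    (PosDef.posSemidef_add (hHPH.smul hc) hR).isUnit

end Matrix

theorem stmt_17 {k d : ℕ} (P : Matrix (Fin d) (Fin d) ℝ) (R : Matrix (Fin k) (Fin k) ℝ)
    (H : Matrix (Fin k) (Fin d) ℝ) (hP : P.PosDef) (hR : R.PosDef)
    (Ci : Matrix (Fin d) (Fin d) ℝ) (hCi : Ci = (P⁻¹ + Hᵀ * R⁻¹ * H)⁻¹)
    (α : ℝ) (hα : 0 < α) :
    (Hᵀ * R⁻¹ * H + α⁻¹ • Ci⁻¹)⁻¹ * (Hᵀ * R⁻¹)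
      = α • (P * Hᵀ * ((1 + α) • (H * P * Hᵀ) + R)⁻¹) := by
  have hCi_inv : Ci⁻¹ = P⁻¹ + Hᵀ * R⁻¹ * H := by
    rw [hCi, nonsing_inv_nonsing_inv _ ((isUnit_iff_isUnit_det _).mp
      (hP.inv.add_posSemidef (hR.posSemidef_transpose_mul_inv_mul H)).isUnit)]
  have hM : Hᵀ * R⁻¹ * H + α⁻¹ • Ci⁻¹ = α⁻¹ • ((1 + α) • (Hᵀ * R⁻¹ * H) + P⁻¹) := by
    rw [hCi_inv]
    match_scalars <;> field_simp
    ring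
  have hN := PosDef.smul_transpose_mul_inv_mul_add_inv H hP hR (by positivity : (0 : ℝ) ≤ 1 + α)
  have := invertibleOfNonzero (inv_ne_zero hα.ne')
  rw [hM, inv_smul _ α⁻¹ ((isUnit_iff_isUnit_det _).mp hN.isUnit), invOf_eq_inv, inv_inv,
    Matrix.smul_mul, hP.kalman_gain_identity H hR (by positivity)]
end
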